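/- Under the standing setup, suppose neither T_f nor T_g is a t-intersecting family. Then either both |T_f| ∈ {2,3} and |T_g| ∈ {2,3}, or (|T_f|, |T_g|) ∈ {(2,4), (4,2)}. -/
import Mathlib


/-- The interval `[a,b] = {a, a+1, …, b}` as a finset of naturals. -/
def Iv (a b : ℕ) : Finset ℕ := Finset.Icc a b

/-- `ksubsets S k` is the family of all `k`-element subsets of `S`. -/
def ksubsets (S : Finset ℕ) (k : ℕ) : Finset (Finset ℕ) :=
  S.powerset.filter (fun F => F.card = k)

/-- Families `F` and `G` are cross `t`-intersecting. -/
def crossInt (t : ℕ) (F G : Finset (Finset ℕ)) : Prop :=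
  ∀ A ∈ F, ∀ B ∈ G, t ≤ (A ∩ B).card

/-- The `t`-covering number of a family of subsets of `[n]`. -/
noncomputable def tau (n t : ℕ) (F : Finset (Finset ℕ)) : ℕ :=
  sInf {c : ℕ | ∃ T : Finset ℕ, T ⊆ Finset.Icc 1 n ∧ T.card = c ∧ ∀ A ∈ F, t ≤ (T ∩ A).card}

/-- The collection of all `t`-covers of `F` of size `t+1`. -/
def covers (n t : ℕ) (F : Finset (Finset ℕ)) : Finset (Finset ℕ) :=
  (Finset.Icc 1 n).powerset.filter (fun T => T.card = t + 1 ∧ ∀ A ∈ F, t ≤ (T ∩ A).card)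

/-- `F ⊆ ksubsets S k` and `G ⊆ ksubsets S l` form a maximal cross `t`-intersecting pair. -/
def maximalCrossIn (S : Finset ℕ) (k l t : ℕ) (F G : Finset (Finset ℕ)) : Prop :=
  F ⊆ ksubsets S k ∧ G ⊆ ksubsets S l ∧ crossInt t F G ∧
  ∀ F' G' : Finset (Finset ℕ), F' ⊆ ksubsets S k → G' ⊆ ksubsets S l →
    crossInt t F' G' → F ⊆ F' → G ⊆ G' → F = F' ∧ G = G'

/-- Elementwise image of a family under a permutation. -/
def mapFam (σ : Equiv.Perm ℕ) (F : Finset (Finset ℕ)) : Finset (Finset ℕ) :=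
  F.image (fun A => A.image σ)

/-- `σ` is a permutation of `[n]` (maps `[n]` into, hence onto, itself). -/
def permOn (n : ℕ) (σ : Equiv.Perm ℕ) : Prop := ∀ x ∈ Finset.Icc 1 n, σ x ∈ Finset.Icc 1 n

/-- The pairs `(F, G)` and `(F', G')` are isomorphic via a permutation of `[n]`. -/
def isoPair (n : ℕ) (F G F' G' : Finset (Finset ℕ)) : Prop :=
  ∃ σ : Equiv.Perm ℕ, permOn n σ ∧ mapFam σ F = F' ∧ mapFam σ G = G'

/-- `F` and `F'` are isomorphic via a permutation of `[n]`. -/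
def isoFam (n : ℕ) (F F' : Finset (Finset ℕ)) : Prop :=
  ∃ σ : Equiv.Perm ℕ, permOn n σ ∧ mapFam σ F = F'

/-- Construction `𝒜(k,t) = {F ∈ C([n],k) : |F ∩ [t+2]| ≥ t+1}`. -/
def famA (n k t : ℕ) : Finset (Finset ℕ) :=
  (ksubsets (Iv 1 n) k).filter (fun F => t + 1 ≤ (F ∩ Iv 1 (t+2)).card)

/-- Construction `𝒞₁(ℓ,t) = {[ℓ+1]\{i} : i ∈ [t+1]} ∪ {G ∈ C([n],ℓ) : [t+1] ⊆ G}`. -/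
def famC1 (n l t : ℕ) : Finset (Finset ℕ) :=
  (Iv 1 (t+1)).image (fun i => (Iv 1 (l+1)).erase i) ∪
  (ksubsets (Iv 1 n) l).filter (fun G => Iv 1 (t+1) ⊆ G)

/-- Construction `𝒞₂(k,t;ℓ)`. -/
def famC2 (n k t l : ℕ) : Finset (Finset ℕ) :=
  (ksubsets (Iv 1 n) k).filter
    (fun F => (F ∩ Iv 1 (t+1)).card = t ∧ 1 ≤ (F ∩ Iv (t+2) (l+1)).card) ∪
  (ksubsets (Iv 1 n) k).filter (fun F => Iv 1 (t+1) ⊆ F)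

/-- Construction `ℋ(k,t;X,Y) = {F ∈ C([n],k) : [t] ⊆ F, |F∩Y| ≥ 1} ∪ {(X∪[t])\{i} : i ∈ [t]}`. -/
def famH (n k t : ℕ) (X Y : Finset ℕ) : Finset (Finset ℕ) :=
  (ksubsets (Iv 1 n) k).filter (fun F => Iv 1 t ⊆ F ∧ 1 ≤ (F ∩ Y).card) ∪
  (Iv 1 t).image (fun i => (X ∪ Iv 1 t).erase i)

/-- Construction `ℬ(k;(a₁,a₂,a₃,a₄))`. -/
def famB (n k a1 a2 a3 a4 : ℕ) : Finset (Finset ℕ) :=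
  (ksubsets (Iv 1 n) k).filter
    (fun F => ({a1, a2} : Finset ℕ) ⊆ F ∨ ({a2, a3} : Finset ℕ) ⊆ F ∨ ({a3, a4} : Finset ℕ) ⊆ F)

/-- Binomial coefficient `C(a,b)` for integers, `0` if `b < 0` or `b > a`. -/
def ch (a b : ℤ) : ℤ := if 0 ≤ b ∧ b ≤ a then (Nat.choose a.toNat b.toNat : ℤ) else 0

/-- `g(m,x,y,t) = m·C(n−t−1,x−t−1) + y(t+1)(y−t+1)·C(n−t−2,x−t−2)`. -/
def gfun (n m x y t : ℤ) : ℤ :=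
  m * ch (n - t - 1) (x - t - 1) + y * (t + 1) * (y - t + 1) * ch (n - t - 2) (x - t - 2)

/-- `a(x,t) = (t+2)·C(n−t−2,x−t−1) + C(n−t−2,x−t−2)`. -/
def afun (n x t : ℤ) : ℤ := (t + 2) * ch (n - t - 2) (x - t - 1) + ch (n - t - 2) (x - t - 2)

/-- `c₁(y,t) = C(n−t−1,y−t−1) + t + 1`. -/
def c1fun (n y t : ℤ) : ℤ := ch (n - t - 1) (y - t - 1) + t + 1

/-- `c₂(x,y,t) = (t+1)(C(n−t−1,x−t) − C(n−y−1,x−t)) + C(n−t−1,x−t−1)`. -/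
def c2fun (n x y t : ℤ) : ℤ :=
  (t + 1) * (ch (n - t - 1) (x - t) - ch (n - y - 1) (x - t)) + ch (n - t - 1) (x - t - 1)

/-- `h(x,y,t) = C(n−t,x−t) − C(n−y−1,x−t) + t`. -/
def hfun (n x y t : ℤ) : ℤ := ch (n - t) (x - t) - ch (n - y - 1) (x - t) + t


section AuxLemmas

lemma struct {t : ℕ} (ht : 1 ≤ t) {A1 A2 B : Finset ℕ}
    (h1 : A1.card = t + 1) (h2 : A2.card = t + 1) (hB : B.card = t + 1)
    (hlt : (A1 ∩ A2).card < t)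
    (hc1 : t ≤ (B ∩ A1).card) (hc2 : t ≤ (B ∩ A2).card) :
    (A1 ∩ A2).card = t - 1 ∧
    ∃ x ∈ A1 \ A2, ∃ y ∈ A2 \ A1, B = (A1 ∩ A2) ∪ {x, y} := by
  have hunion : (B ∩ A1) ∪ (B ∩ A2) = B ∩ (A1 ∪ A2) := by
    ext z; simp only [Finset.mem_union, Finset.mem_inter]; tauto
  have hinter : (B ∩ A1) ∩ (B ∩ A2) = B ∩ (A1 ∩ A2) := by
    ext z; simp only [Finset.mem_inter]; tauto
  have hadd := Finset.card_inter_add_card_union (B ∩ A1) (B ∩ A2)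
  rw [hunion, hinter] at hadd
  have hle : (B ∩ (A1 ∪ A2)).card ≤ t + 1 := by
    calc (B ∩ (A1 ∪ A2)).card ≤ B.card := Finset.card_le_card Finset.inter_subset_left
    _ = t + 1 := hB
  have hBDle : (B ∩ (A1 ∩ A2)).card ≤ (A1 ∩ A2).card :=
    Finset.card_le_card Finset.inter_subset_right
  have hDcard : (A1 ∩ A2).card = t - 1 := by omega
  have hBD : B ∩ (A1 ∩ A2) = A1 ∩ A2 :=
    Finset.eq_of_subset_of_card_le Finset.inter_subset_right (by omega)
  have hDB : A1 ∩ A2 ⊆ B := by rw [← hBD]; exact Finset.inter_subset_left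
  have hns1 : ¬ (B ∩ A1 ⊆ A1 ∩ A2) := by
    intro h
    have := Finset.card_le_card h
    omega
  have hns2 : ¬ (B ∩ A2 ⊆ A1 ∩ A2) := by
    intro h
    have := Finset.card_le_card h
    omega
  obtain ⟨x, hxB, hxD⟩ := Finset.not_subset.mp hns1
  obtain ⟨y, hyB, hyD⟩ := Finset.not_subset.mp hns2
  simp only [Finset.mem_inter] at hxB hyB hxD hyD
  have hx : x ∈ A1 \ A2 := by
    simp only [Finset.mem_sdiff]; exact ⟨hxB.2, fun h => hxD ⟨hxB.2, h⟩⟩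
  have hy : y ∈ A2 \ A1 := by
    simp only [Finset.mem_sdiff]; exact ⟨hyB.2, fun h => hyD ⟨h, hyB.2⟩⟩
  refine ⟨hDcard, x, hx, y, hy, ?_⟩
  have hxy : x ≠ y := by
    intro h; subst h
    exact (Finset.mem_sdiff.mp hx).2 (Finset.mem_sdiff.mp hy).1
  have hsub : (A1 ∩ A2) ∪ {x, y} ⊆ B := by
    intro z hz
    rcases Finset.mem_union.mp hz with h | h
    · exact hDB h
    · rcases Finset.mem_insert.mp h with h | h
      · subst h; exact hxB.1
      · rw [Finset.mem_singleton] at h; subst h; exact hyB.1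
  have hxD' : x ∉ A1 ∩ A2 := fun h => hxD (Finset.mem_inter.mp h)
  have hyD' : y ∉ A1 ∩ A2 := fun h => hyD (Finset.mem_inter.mp h)
  have hcard : ((A1 ∩ A2) ∪ {x, y}).card = t + 1 := by
    have hdisj : Disjoint (A1 ∩ A2) ({x, y} : Finset ℕ) := by
      rw [Finset.disjoint_right]
      intro a ha
      rcases Finset.mem_insert.mp ha with h | h
      · subst h; exact hxD'
      · rw [Finset.mem_singleton] at h; subst h; exact hyD'
    rw [Finset.card_union_of_disjoint hdisj, Finset.card_pair hxy]
    omega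
  exact (Finset.eq_of_subset_of_card_le hsub (by omega)).symm

-- every member of B is one of ≤ 4 candidates
lemma fam_sub_image {t : ℕ} (ht : 1 ≤ t) {A1 A2 : Finset ℕ} {B : Finset (Finset ℕ)}
    (h1 : A1.card = t + 1) (h2 : A2.card = t + 1)
    (hlt : (A1 ∩ A2).card < t)
    (hBcard : ∀ T ∈ B, T.card = t + 1)
    (hcr : ∀ T ∈ B, t ≤ (T ∩ A1).card ∧ t ≤ (T ∩ A2).card) :
    B ⊆ ((A1 \ A2) ×ˢ (A2 \ A1)).image (fun p => (A1 ∩ A2) ∪ {p.1, p.2}) := by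
  intro T hT
  obtain ⟨_, x, hx, y, hy, hTeq⟩ :=
    struct ht h1 h2 (hBcard T hT) hlt (hcr T hT).1 (hcr T hT).2
  exact Finset.mem_image.mpr ⟨(x, y), Finset.mem_product.mpr ⟨hx, hy⟩, hTeq.symm⟩

lemma card_le_four {t : ℕ} (ht : 1 ≤ t) {A1 A2 : Finset ℕ} {B : Finset (Finset ℕ)}
    (h1 : A1.card = t + 1) (h2 : A2.card = t + 1)
    (hlt : (A1 ∩ A2).card < t)
    (hBcard : ∀ T ∈ B, T.card = t + 1)
    (hcr : ∀ T ∈ B, t ≤ (T ∩ A1).card ∧ t ≤ (T ∩ A2).card) :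
    B.card ≤ 4 := by
  rcases B.eq_empty_or_nonempty with h | ⟨T0, hT0⟩
  · simp [h]
  have hD := (struct ht h1 h2 (hBcard T0 hT0) hlt (hcr T0 hT0).1 (hcr T0 hT0).2).1
  have hs1 : (A1 \ A2).card = 2 := by
    have := Finset.card_sdiff_add_card_inter A1 A2
    omega
  have hs2 : (A2 \ A1).card = 2 := by
    have := Finset.card_sdiff_add_card_inter A2 A1
    rw [Finset.inter_comm] at this
    omega
  calc B.card ≤ (((A1 \ A2) ×ˢ (A2 \ A1)).image (fun p => (A1 ∩ A2) ∪ {p.1, p.2})).card :=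
        Finset.card_le_card (fam_sub_image ht h1 h2 hlt hBcard hcr)
    _ ≤ ((A1 \ A2) ×ˢ (A2 \ A1)).card := Finset.card_image_le
    _ = 4 := by rw [Finset.card_product, hs1, hs2]

lemma pair_inter {D : Finset ℕ} {x y x' y' : ℕ} (hx : x ∉ D) (hy : y ∉ D)
    (h1 : x ≠ x') (h2 : x ≠ y') (h3 : y ≠ x') (h4 : y ≠ y') :
    (D ∪ {x, y}) ∩ (D ∪ {x', y'}) = D := by
  ext z
  simp only [Finset.mem_inter, Finset.mem_union, Finset.mem_insert, Finset.mem_singleton]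
  constructor
  · rintro ⟨h | h | h, h' | h' | h'⟩ <;> simp_all
  · intro h; exact ⟨Or.inl h, Or.inl h⟩

lemma pair_sdiff {D : Finset ℕ} {x y x' y' : ℕ} (hx : x ∉ D) (hy : y ∉ D)
    (h1 : x ≠ x') (h2 : x ≠ y') (h3 : y ≠ x') (h4 : y ≠ y') :
    (D ∪ {x, y}) \ (D ∪ {x', y'}) = {x, y} := by
  ext z
  simp only [Finset.mem_sdiff, Finset.mem_union, Finset.mem_insert, Finset.mem_singleton,
    not_or]
  constructor
  · rintro ⟨h | h | h, h'⟩ <;> simp_all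
  · rintro (h | h) <;> subst h <;> simp_all

lemma four_imp_two {t : ℕ} (ht : 1 ≤ t) {A B : Finset (Finset ℕ)}
    (hAcard : ∀ T ∈ A, T.card = t + 1) (hBcard : ∀ T ∈ B, T.card = t + 1)
    (hcross : ∀ T ∈ A, ∀ T' ∈ B, t ≤ (T ∩ T').card)
    {A1 A2 : Finset ℕ} (hA1 : A1 ∈ A) (hA2 : A2 ∈ A) (hlt : (A1 ∩ A2).card < t)
    (hB4 : B.card = 4) : A.card = 2 := by
  have h1 := hAcard A1 hA1
  have h2 := hAcard A2 hA2
  have hcr : ∀ T ∈ B, t ≤ (T ∩ A1).card ∧ t ≤ (T ∩ A2).card := fun T hT =>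
    ⟨by rw [Finset.inter_comm]; exact hcross A1 hA1 T hT,
     by rw [Finset.inter_comm]; exact hcross A2 hA2 T hT⟩
  obtain ⟨T0, hT0⟩ : B.Nonempty := Finset.card_pos.mp (by omega)
  have hD := (struct ht h1 h2 (hBcard T0 hT0) hlt (hcr T0 hT0).1 (hcr T0 hT0).2).1
  have hs1 : (A1 \ A2).card = 2 := by
    have := Finset.card_sdiff_add_card_inter A1 A2; omega
  have hs2 : (A2 \ A1).card = 2 := by
    have := Finset.card_sdiff_add_card_inter A2 A1
    rw [Finset.inter_comm] at this; omega
  obtain ⟨x1, x2, hx12, hxeq⟩ := Finset.card_eq_two.mp hs1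
  obtain ⟨y1, y2, hy12, hyeq⟩ := Finset.card_eq_two.mp hs2
  have hx1 : x1 ∈ A1 \ A2 := by rw [hxeq]; simp
  have hx2 : x2 ∈ A1 \ A2 := by rw [hxeq]; simp
  have hy1 : y1 ∈ A2 \ A1 := by rw [hyeq]; simp
  have hy2 : y2 ∈ A2 \ A1 := by rw [hyeq]; simp
  have hx1m := Finset.mem_sdiff.mp hx1
  have hx2m := Finset.mem_sdiff.mp hx2
  have hy1m := Finset.mem_sdiff.mp hy1
  have hy2m := Finset.mem_sdiff.mp hy2
  have hx1y1 : x1 ≠ y1 := fun h => hy1m.2 (h ▸ hx1m.1)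
  have hx1y2 : x1 ≠ y2 := fun h => hy2m.2 (h ▸ hx1m.1)
  have hx2y1 : x2 ≠ y1 := fun h => hy1m.2 (h ▸ hx2m.1)
  have hx2y2 : x2 ≠ y2 := fun h => hy2m.2 (h ▸ hx2m.1)
  have hx1D : x1 ∉ A1 ∩ A2 := fun h => hx1m.2 (Finset.mem_inter.mp h).2
  have hx2D : x2 ∉ A1 ∩ A2 := fun h => hx2m.2 (Finset.mem_inter.mp h).2
  have hy1D : y1 ∉ A1 ∩ A2 := fun h => hy1m.2 (Finset.mem_inter.mp h).1
  have hy2D : y2 ∉ A1 ∩ A2 := fun h => hy2m.2 (Finset.mem_inter.mp h).1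
  -- B equals the set of four candidates
  have hBsub := fam_sub_image ht h1 h2 hlt hBcard hcr
  have hBS : B = ((A1 \ A2) ×ˢ (A2 \ A1)).image (fun p => (A1 ∩ A2) ∪ {p.1, p.2}) := by
    apply Finset.eq_of_subset_of_card_le hBsub
    calc (((A1 \ A2) ×ˢ (A2 \ A1)).image (fun p => (A1 ∩ A2) ∪ {p.1, p.2})).card
        ≤ ((A1 \ A2) ×ˢ (A2 \ A1)).card := Finset.card_image_le
      _ = 4 := by rw [Finset.card_product, hs1, hs2]
      _ ≤ B.card := by omega
  have hmem : ∀ x ∈ A1 \ A2, ∀ y ∈ A2 \ A1, (A1 ∩ A2) ∪ {x, y} ∈ B := by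
    intro x hx y hy
    rw [hBS]
    exact Finset.mem_image.mpr ⟨(x, y), Finset.mem_product.mpr ⟨hx, hy⟩, rfl⟩
  have hB11 := hmem x1 hx1 y1 hy1
  have hB22 := hmem x2 hx2 y2 hy2
  have hB12 := hmem x1 hx1 y2 hy2
  have hB21 := hmem x2 hx2 y1 hy1
  -- intersections and differences of the diagonal pairs
  have hI1 : ((A1 ∩ A2) ∪ {x1, y1}) ∩ ((A1 ∩ A2) ∪ {x2, y2}) = A1 ∩ A2 :=
    pair_inter hx1D hy1D hx12 hx1y2 (Ne.symm hx2y1) hy12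
  have hd11 : ((A1 ∩ A2) ∪ {x1, y1}) \ ((A1 ∩ A2) ∪ {x2, y2}) = {x1, y1} :=
    pair_sdiff hx1D hy1D hx12 hx1y2 (Ne.symm hx2y1) hy12
  have hd22 : ((A1 ∩ A2) ∪ {x2, y2}) \ ((A1 ∩ A2) ∪ {x1, y1}) = {x2, y2} :=
    pair_sdiff hx2D hy2D (Ne.symm hx12) hx2y1 (Ne.symm hx1y2) (Ne.symm hy12)
  have hI2 : ((A1 ∩ A2) ∪ {x1, y2}) ∩ ((A1 ∩ A2) ∪ {x2, y1}) = A1 ∩ A2 :=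
    pair_inter hx1D hy2D hx12 hx1y1 (Ne.symm hx2y2) (Ne.symm hy12)
  have hd12 : ((A1 ∩ A2) ∪ {x1, y2}) \ ((A1 ∩ A2) ∪ {x2, y1}) = {x1, y2} :=
    pair_sdiff hx1D hy2D hx12 hx1y1 (Ne.symm hx2y2) (Ne.symm hy12)
  have hd21 : ((A1 ∩ A2) ∪ {x2, y1}) \ ((A1 ∩ A2) ∪ {x1, y2}) = {x2, y1} :=
    pair_sdiff hx2D hy1D (Ne.symm hx12) hx2y2 (Ne.symm hx1y1) hy12
  have hA1eq : A1 = (A1 ∩ A2) ∪ {x1, x2} := by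
    rw [← hxeq]
    ext z
    simp only [Finset.mem_union, Finset.mem_inter, Finset.mem_sdiff]
    tauto
  have hA2eq : A2 = (A1 ∩ A2) ∪ {y1, y2} := by
    rw [← hyeq]
    ext z
    simp only [Finset.mem_union, Finset.mem_inter, Finset.mem_sdiff]
    tauto
  have key : ∀ A0 ∈ A, A0 = A1 ∨ A0 = A2 := by
    intro A0 hA0
    obtain ⟨-, u, hu, v, hv, hA0eq⟩ :=
      struct ht (hBcard _ hB11) (hBcard _ hB22) (hAcard A0 hA0)
        (by rw [hI1]; omega) (hcross A0 hA0 _ hB11) (hcross A0 hA0 _ hB22)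
    obtain ⟨-, u', hu', v', hv', hA0eq'⟩ :=
      struct ht (hBcard _ hB12) (hBcard _ hB21) (hAcard A0 hA0)
        (by rw [hI2]; omega) (hcross A0 hA0 _ hB12) (hcross A0 hA0 _ hB21)
    rw [hI1] at hA0eq
    rw [hI2] at hA0eq'
    rw [hd11] at hu
    rw [hd22] at hv
    rw [hd12] at hu'
    rw [hd21] at hv'
    have hu'A : u' ∈ A0 := by rw [hA0eq']; simp
    have hv'A : v' ∈ A0 := by rw [hA0eq']; simp
    simp only [Finset.mem_insert, Finset.mem_singleton] at hu hv hu' hv'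
    rcases hu with hu | hu <;> rcases hv with hv | hv
    · rw [hu, hv] at hA0eq
      left; rw [hA0eq]; exact hA1eq.symm
    · -- u = x1, v = y2 : contradiction via v'
      exfalso
      rw [hu, hv] at hA0eq
      rw [hA0eq] at hv'A
      simp only [Finset.mem_union, Finset.mem_insert, Finset.mem_singleton] at hv'A
      rcases hv' with h | h <;> rw [h] at hv'A <;>
        rcases hv'A with h' | h' | h'
      · exact hx2D h'
      · exact hx12 h'.symm
      · exact hx2y2 h'
      · exact hy1D h'
      · exact hx1y1 h'.symm
      · exact hy12 h'
    · -- u = y1, v = x2 : contradiction via u'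
      exfalso
      rw [hu, hv] at hA0eq
      rw [hA0eq] at hu'A
      simp only [Finset.mem_union, Finset.mem_insert, Finset.mem_singleton] at hu'A
      rcases hu' with h | h <;> rw [h] at hu'A <;>
        rcases hu'A with h' | h' | h'
      · exact hx1D h'
      · exact hx1y1 h'
      · exact hx12 h'
      · exact hy2D h'
      · exact hy12 h'.symm
      · exact hx2y2 h'.symm
    · rw [hu, hv] at hA0eq
      right; rw [hA0eq]; exact hA2eq.symm
  have hA1A2 : A1 ≠ A2 := fun h => hx1m.2 (h ▸ hx1m.1)
  have hAeq : A = {A1, A2} := by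
    apply Finset.Subset.antisymm
    · intro A0 hA0
      rcases key A0 hA0 with h | h <;> simp [h]
    · intro A0 hA0
      rcases Finset.mem_insert.mp hA0 with h | h
      · subst h; exact hA1
      · rw [Finset.mem_singleton] at h; subst h; exact hA2
  rw [hAeq, Finset.card_insert_of_notMem (by simpa using hA1A2), Finset.card_singleton]

lemma mem_covers {n t : ℕ} {F : Finset (Finset ℕ)} {T : Finset ℕ} :
    T ∈ covers n t F ↔
      T ⊆ Finset.Icc 1 n ∧ T.card = t + 1 ∧ ∀ A ∈ F, t ≤ (T ∩ A).card := by
  simp [covers, Finset.mem_filter, Finset.mem_powerset, and_assoc]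

lemma covers_cross {n k l t : ℕ} (hl : t + 1 ≤ l) (hnl : l + t + 1 ≤ n)
    {F G : Finset (Finset ℕ)} (hmax : maximalCrossIn (Iv 1 n) k l t F G) :
    ∀ T ∈ covers n t F, ∀ T' ∈ covers n t G, t ≤ (T ∩ T').card := by
  obtain ⟨hF, hG, hc, hm⟩ := hmax
  intro T hT T' hT'
  obtain ⟨hTsub, hTcard, hTcov⟩ := mem_covers.mp hT
  obtain ⟨hT'sub, hT'card, hT'cov⟩ := mem_covers.mp hT'
  have hUsub : (T ∪ T') ⊆ Finset.Icc 1 n := Finset.union_subset hTsub hT'sub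
  have hcard : l - (t + 1) ≤ ((Finset.Icc 1 n) \ (T ∪ T')).card := by
    have h2 := Finset.card_sdiff_of_subset hUsub
    have h3 : (T ∪ T').card ≤ (t + 1) + (t + 1) := by
      calc (T ∪ T').card ≤ T.card + T'.card := Finset.card_union_le _ _
        _ = (t + 1) + (t + 1) := by rw [hTcard, hT'card]
    have h4 : (Finset.Icc 1 n).card = n := by rw [Nat.card_Icc]; omega
    omega
  obtain ⟨E, hEsub, hEcard⟩ := Finset.exists_subset_card_eq hcard
  have hEnot : ∀ z ∈ E, z ∉ T ∪ T' := fun z hz =>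
    (Finset.mem_sdiff.mp (hEsub hz)).2
  have hTE : Disjoint T E := Finset.disjoint_left.mpr
    (fun {z} hz hz' => hEnot z hz' (Finset.mem_union_left _ hz))
  have hG0sub : T ∪ E ⊆ Finset.Icc 1 n :=
    Finset.union_subset hTsub (hEsub.trans Finset.sdiff_subset)
  have hG0card : (T ∪ E).card = l := by
    rw [Finset.card_union_of_disjoint hTE, hTcard, hEcard]; omega
  have hG0k : T ∪ E ∈ ksubsets (Iv 1 n) l := by
    simp only [ksubsets, Iv, Finset.mem_filter, Finset.mem_powerset]
    exact ⟨hG0sub, hG0card⟩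
  have hcross' : crossInt t F (insert (T ∪ E) G) := by
    intro A hA B hB
    rcases Finset.mem_insert.mp hB with rfl | hB
    · calc t ≤ (T ∩ A).card := hTcov A hA
        _ ≤ (A ∩ (T ∪ E)).card := Finset.card_le_card (by
            intro z hz
            have hz' := Finset.mem_inter.mp hz
            exact Finset.mem_inter.mpr ⟨hz'.2, Finset.mem_union_left _ hz'.1⟩)
    · exact hc A hA B hB
  have hmeq := (hm F (insert (T ∪ E) G) hF
    (Finset.insert_subset hG0k hG) hcross' Finset.Subset.rfl (Finset.subset_insert _ _)).2
  have hG0G : (T ∪ E) ∈ G := hmeq ▸ Finset.mem_insert_self _ _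
  have hkey := hT'cov _ hG0G
  have heq : T' ∩ (T ∪ E) = T' ∩ T := by
    ext z
    simp only [Finset.mem_inter, Finset.mem_union]
    constructor
    · rintro ⟨h1, h2 | h2⟩
      · exact ⟨h1, h2⟩
      · exact absurd (Finset.mem_union_right _ h1) (hEnot z h2)
    · rintro ⟨h1, h2⟩; exact ⟨h1, Or.inl h2⟩
  rw [heq] at hkey
  rw [Finset.inter_comm]
  exact hkey

end AuxLemmas

/-- Lemma 2.8(i). -/
theorem both_covers_not_intersecting_cards
    (n k l t : ℕ) (hn0 : 0 < n) (ht0 : 0 < t) (hk : t + 1 ≤ k) (hl : t + 1 ≤ l)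
    (hn : (t+1)^2 * (k+l)^2 * (k - t + 1) * (l - t + 1) + k + l - t ≤ n)
    (F G : Finset (Finset ℕ))
    (hmax : maximalCrossIn (Iv 1 n) k l t F G)
    (htF : tau n t F = t + 1) (htG : tau n t G = t + 1)
    (hTf : ¬ crossInt t (covers n t F) (covers n t F))
    (hTg : ¬ crossInt t (covers n t G) (covers n t G)) :
    (((covers n t F).card = 2 ∨ (covers n t F).card = 3) ∧
      ((covers n t G).card = 2 ∨ (covers n t G).card = 3)) ∨
    ((covers n t F).card = 2 ∧ (covers n t G).card = 4) ∨
    ((covers n t F).card = 4 ∧ (covers n t G).card = 2) := by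
  have ht : 1 ≤ t := ht0
  unfold crossInt at hTf hTg
  push_neg at hTf hTg
  obtain ⟨A1, hA1, A2, hA2, hAlt⟩ := hTf
  obtain ⟨B1, hB1, B2, hB2, hBlt⟩ := hTg
  have hcovF : ∀ T ∈ covers n t F, T.card = t + 1 := fun T hT => (mem_covers.mp hT).2.1
  have hcovG : ∀ T ∈ covers n t G, T.card = t + 1 := fun T hT => (mem_covers.mp hT).2.1
  obtain ⟨P, hPeq⟩ : ∃ P, P = (t+1)^2 * (k+l)^2 * (k - t + 1) * (l - t + 1) := ⟨_, rfl⟩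
  have hP : t + 1 ≤ P := by
    have f1 : 1 ≤ (k+l)^2 := Nat.one_le_iff_ne_zero.mpr (pow_ne_zero 2 (by omega))
    calc t + 1 ≤ (t+1)^2 * 1 * 1 * 1 := by nlinarith
      _ ≤ (t+1)^2 * (k+l)^2 * (k - t + 1) * (l - t + 1) :=
          Nat.mul_le_mul (Nat.mul_le_mul (Nat.mul_le_mul le_rfl f1) (by omega)) (by omega)
      _ = P := hPeq.symm
  rw [← hPeq] at hn
  have hnl : l + t + 1 ≤ n := by omega
  have hcr := covers_cross hl hnl hmax
  have hcr' : ∀ T ∈ covers n t G, ∀ T' ∈ covers n t F, t ≤ (T ∩ T').card :=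
    fun T hT T' hT' => by rw [Finset.inter_comm]; exact hcr T' hT' T hT
  have h2F : 2 ≤ (covers n t F).card := by
    apply Finset.one_lt_card.mpr
    refine ⟨A1, hA1, A2, hA2, fun h => ?_⟩
    rw [h, Finset.inter_self] at hAlt
    have := hcovF A2 hA2
    omega
  have h2G : 2 ≤ (covers n t G).card := by
    apply Finset.one_lt_card.mpr
    refine ⟨B1, hB1, B2, hB2, fun h => ?_⟩
    rw [h, Finset.inter_self] at hBlt
    have := hcovG B2 hB2
    omega
  have h4F : (covers n t F).card ≤ 4 :=
    card_le_four ht (hcovG B1 hB1) (hcovG B2 hB2) hBlt hcovF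
      (fun T hT => ⟨hcr T hT B1 hB1, hcr T hT B2 hB2⟩)
  have h4G : (covers n t G).card ≤ 4 :=
    card_le_four ht (hcovF A1 hA1) (hcovF A2 hA2) hAlt hcovG
      (fun T hT => ⟨hcr' T hT A1 hA1, hcr' T hT A2 hA2⟩)
  have h42F : (covers n t G).card = 4 → (covers n t F).card = 2 :=
    fun h => four_imp_two ht hcovF hcovG hcr hA1 hA2 hAlt h
  have h42G : (covers n t F).card = 4 → (covers n t G).card = 2 :=
    fun h => four_imp_two ht hcovG hcovF hcr' hB1 hB2 hBlt h
  omega
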